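/- arXiv:1606.03563 — 2 statements merged into one kernel-verified Lean document; each statement's English description precedes it below -/
import Mathlib

section
/- Let n ≥ 4, let β ∈ PB_n be a Brunnian braid, and let i,j,k ∈ {1,…,n} be distinct. Then w_{(i,j,k)}(φ_n(β)) = 1 in F_n^3, where the invariant is evaluated on any good-condition word representing φ_n(β). In particular, the MN-invariants w_{(i,j,k)} vanish on images of all Brunnian braids. -/
/-!
The invariant `w_{(i,j,k)}` is the left component of a homomorphism
`G_n^3 → F_n^3 ⋊ (ℤ/2 × ℤ/2)^{\{1,…,n\} ∖ \{i,j,k\}}`: the letter `a_{ijk}` goes to the generator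
`σ = 0` of `F_n^3`, and any other `a_T` to the translation by the change that one occurrence of
`a_T` makes in all later `i_c`. The relations of `G_n^3` hold there because the three faces other
than `{i,j,k}` of a `4`-set containing `{i,j,k}` have cancelling translations.

Pick a strand `m ∉ {i,j,k}`. Each letter of `c^n_{a,m}` and `c^n_{m,b}` contains `m`, so it maps
to an involutive translation, and the composite with `φ_n` kills `b_{am}` and `b_{mb}`. Hence
this composite factors through the deletion of the strand `m` (which has a section reinserting the
strand), and it vanishes on Brunnian braids.
-/

namespace GnkBrunnian

/-! ## Index types for generators -/

/-- Validity of a pair index: `1 ≤ i < j ≤ n`. -/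
abbrev P2ok (n : ℕ) (p : ℕ × ℕ) : Prop := 1 ≤ p.1 ∧ p.1 < p.2 ∧ p.2 ≤ n

/-- Index type for the generators `a_{ij}` of `G_n^2` (and `b_{ij}` of `PB_n`). -/
abbrev PIdx (n : ℕ) := {p : ℕ × ℕ // P2ok n p}

/-- Validity of a triple index: `1 ≤ i < j < k ≤ n`. -/
abbrev T3ok (n : ℕ) (t : ℕ × ℕ × ℕ) : Prop :=
  1 ≤ t.1 ∧ t.1 < t.2.1 ∧ t.2.1 < t.2.2 ∧ t.2.2 ≤ n

/-- Index type for the generators `a_{ijk}` of `G_n^3`. -/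
abbrev TIdx (n : ℕ) := {t : ℕ × ℕ × ℕ // T3ok n t}

def sort2 (a b : ℕ) : ℕ × ℕ := (min a b, max a b)

def sort3 (a b c : ℕ) : ℕ × ℕ × ℕ :=
  (min a (min b c), a + b + c - min a (min b c) - max a (max b c), max a (max b c))

def pairSet {n : ℕ} (p : PIdx n) : Finset ℕ := {p.1.1, p.1.2}

def tripSet {n : ℕ} (t : TIdx n) : Finset ℕ := {t.1.1, t.1.2.1, t.1.2.2}

/-- Reindexing after deleting the strand `m` : indices above `m` are decreased by one. -/
def del (m x : ℕ) : ℕ := if m < x then x - 1 else x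

/-! ## The group `G_n^2` -/

/-- The free-group letter `a_{\{a,b\}}` (trivial if the index is out of range). -/
def fgen2 (n a b : ℕ) : FreeGroup (PIdx n) :=
  if h : P2ok n (sort2 a b) then FreeGroup.of ⟨sort2 a b, h⟩ else 1

/-- The defining relators of `G_n^2`. -/
def rels2 (n : ℕ) : Set (FreeGroup (PIdx n)) :=
  {r | ∃ a : PIdx n, r = .of a * .of a} ∪
  {r | ∃ i j k l : ℕ,
      1 ≤ i ∧ i ≤ n ∧ 1 ≤ j ∧ j ≤ n ∧ 1 ≤ k ∧ k ≤ n ∧ 1 ≤ l ∧ l ≤ n ∧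
      i ≠ j ∧ i ≠ k ∧ i ≠ l ∧ j ≠ k ∧ j ≠ l ∧ k ≠ l ∧
      r = fgen2 n i j * fgen2 n k l * (fgen2 n i j)⁻¹ * (fgen2 n k l)⁻¹} ∪
  {r | ∃ i j k : ℕ,
      1 ≤ i ∧ i ≤ n ∧ 1 ≤ j ∧ j ≤ n ∧ 1 ≤ k ∧ k ≤ n ∧ i ≠ j ∧ i ≠ k ∧ j ≠ k ∧
      r = fgen2 n i j * fgen2 n i k * fgen2 n j k *
          (fgen2 n j k * fgen2 n i k * fgen2 n i j)⁻¹}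

/-- The group `G_n^2`. -/
abbrev G2 (n : ℕ) := PresentedGroup (rels2 n)

/-- The generator `a_{\{a,b\}}` of `G_n^2` (trivial if the index is out of range). -/
def ggen2 (n a b : ℕ) : G2 n :=
  if h : P2ok n (sort2 a b) then PresentedGroup.of ⟨sort2 a b, h⟩ else 1

/-- The element of `G_n^2` represented by a word in the generators. -/
def toG2 {n : ℕ} (β : List (PIdx n)) : G2 n :=
  (β.map fun a => (PresentedGroup.of a : G2 n)).prod

/-! ## The group `G_n^3` -/

/-- The free-group letter `a_{\{a,b,c\}}` (trivial if the index is out of range). -/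
def fgen3 (n a b c : ℕ) : FreeGroup (TIdx n) :=
  if h : T3ok n (sort3 a b c) then FreeGroup.of ⟨sort3 a b c, h⟩ else 1

/-- The defining relators of `G_n^3`. -/
def rels3 (n : ℕ) : Set (FreeGroup (TIdx n)) :=
  {r | ∃ a : TIdx n, r = .of a * .of a} ∪
  {r | ∃ a b : TIdx n, (tripSet a ∩ tripSet b).card < 2 ∧
      r = .of a * .of b * (.of a)⁻¹ * (.of b)⁻¹} ∪
  {r | ∃ i j k l : ℕ,
      1 ≤ i ∧ i ≤ n ∧ 1 ≤ j ∧ j ≤ n ∧ 1 ≤ k ∧ k ≤ n ∧ 1 ≤ l ∧ l ≤ n ∧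
      i ≠ j ∧ i ≠ k ∧ i ≠ l ∧ j ≠ k ∧ j ≠ l ∧ k ≠ l ∧
      r = fgen3 n i j k * fgen3 n i j l * fgen3 n i k l * fgen3 n j k l *
          (fgen3 n j k l * fgen3 n i k l * fgen3 n i j l * fgen3 n i j k)⁻¹}

/-- The group `G_n^3`. -/
abbrev G3 (n : ℕ) := PresentedGroup (rels3 n)

/-- The generator `a_{\{a,b,c\}}` of `G_n^3` (trivial if the index is out of range). -/
def ggen3 (n a b c : ℕ) : G3 n :=
  if h : T3ok n (sort3 a b c) then PresentedGroup.of ⟨sort3 a b c, h⟩ else 1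

/-- The element of `G_n^3` represented by a word in the generators. -/
def toG3 {n : ℕ} (β : List (TIdx n)) : G3 n :=
  (β.map fun a => (PresentedGroup.of a : G3 n)).prod

/-! ## The pure braid group `PB_n` (standard Artin/Birman presentation) -/

/-- The defining relators of the pure braid group on `n` strands, in the standard
presentation on the generators `b_{ij} = A_{ij}`, `1 ≤ i < j ≤ n`. -/
def relsPB (n : ℕ) : Set (FreeGroup (PIdx n)) :=
  {x | ∃ r s i j : ℕ, P2ok n (r, s) ∧ P2ok n (i, j) ∧ (s < i ∨ (i < r ∧ s < j)) ∧
      x = (fgen2 n r s)⁻¹ * fgen2 n i j * fgen2 n r s * (fgen2 n i j)⁻¹} ∪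
  {x | ∃ r s j : ℕ, 1 ≤ r ∧ r < s ∧ s < j ∧ j ≤ n ∧
      x = (fgen2 n r s)⁻¹ * fgen2 n s j * fgen2 n r s *
          (fgen2 n r j * fgen2 n s j * (fgen2 n r j)⁻¹)⁻¹} ∪
  {x | ∃ r s j : ℕ, 1 ≤ r ∧ r < s ∧ s < j ∧ j ≤ n ∧
      x = (fgen2 n r s)⁻¹ * fgen2 n r j * fgen2 n r s *
          ((fgen2 n r j * fgen2 n s j) * fgen2 n r j * (fgen2 n r j * fgen2 n s j)⁻¹)⁻¹} ∪
  {x | ∃ r i s j : ℕ, 1 ≤ r ∧ r < i ∧ i < s ∧ s < j ∧ j ≤ n ∧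
      x = (fgen2 n r s)⁻¹ * fgen2 n i j * fgen2 n r s *
          ((fgen2 n r j * fgen2 n s j * (fgen2 n r j)⁻¹ * (fgen2 n s j)⁻¹) * fgen2 n i j *
           (fgen2 n r j * fgen2 n s j * (fgen2 n r j)⁻¹ * (fgen2 n s j)⁻¹)⁻¹)⁻¹}

/-- The pure braid group on `n` strands. -/
abbrev PB (n : ℕ) := PresentedGroup (relsPB n)

/-- The standard generator `b_{ij}` of `PB_n` (trivial if the index is out of range). -/
def pbgen (n a b : ℕ) : PB n :=
  if h : P2ok n (sort2 a b) then PresentedGroup.of ⟨sort2 a b, h⟩ else 1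

/-! ## The elements `c^n_{i,j}` and the homomorphism `φ_n` -/

/-- `c^n_{i,j} = (∏_{k=j+1}^{n} a_{ijk}) * (∏_{k=1, k∉{i,j}}^{j-1} a_{ijk}) ∈ G_n^3`. -/
def cElt (n i j : ℕ) : G3 n :=
  (((List.range' (j + 1) (n - j)).map fun k => ggen3 n i j k).prod) *
  (((List.range' 1 (j - 1)).map fun k => ggen3 n i j k).prod)

/-- The image of `b_{ij}` under `φ_n`:
`(c^n_{i,i+1})⁻¹ ⋯ (c^n_{i,j-1})⁻¹ (c^n_{i,j})² c^n_{i,j-1} ⋯ c^n_{i,i+1}`. -/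
def phiElt (n i j : ℕ) : G3 n :=
  (((List.range' (i + 1) (j - 1 - i)).map fun m => (cElt n i m)⁻¹).prod) *
  (cElt n i j) ^ 2 *
  (((List.range' (i + 1) (j - 1 - i)).reverse.map fun m => cElt n i m).prod)

/-- `q` is the strand-deletion homomorphism `q_m : G_n^3 → G_{n-1}^3`. -/
def IsShift3 (n m : ℕ) (q : G3 n →* G3 (n - 1)) : Prop :=
  ∀ i j k : ℕ, 1 ≤ i → i < j → j < k → k ≤ n →
    q (ggen3 n i j k) =
      if m = i ∨ m = j ∨ m = k then 1
      else ggen3 (n - 1) (del m i) (del m j) (del m k)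

/-- `p` is the strand-deletion homomorphism `p_m : PB_n → PB_{n-1}`. -/
def IsShiftPB (n m : ℕ) (p : PB n →* PB (n - 1)) : Prop :=
  ∀ i j : ℕ, 1 ≤ i → i < j → j ≤ n →
    p (pbgen n i j) =
      if m = i ∨ m = j then 1 else pbgen (n - 1) (del m i) (del m j)

/-- `φ` is the Manturov–Nikonov homomorphism `φ_n : PB_n → G_n^3`. -/
def IsPhi (n : ℕ) (φ : PB n →* G3 n) : Prop :=
  ∀ i j : ℕ, 1 ≤ i → i < j → j ≤ n → φ (pbgen n i j) = phiElt n i j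

/-! ## Words and good condition -/

def good2 {n : ℕ} (β : List (PIdx n)) : Prop := ∀ a : PIdx n, Even (β.count a)

def good3 {n : ℕ} (β : List (TIdx n)) : Prop := ∀ a : TIdx n, Even (β.count a)

/-! ## Free products of copies of `ℤ/2` -/

/-- The free product of copies of `ℤ/2ℤ` indexed by `ι`. -/
abbrev FP2 (ι : Type) := PresentedGroup {r : FreeGroup ι | ∃ a : ι, r = .of a * .of a}

/-- Indices `l ∈ {1,…,n} \ {i,j,k}`. -/
abbrev SIdx3 (n i j k : ℕ) := {l : ℕ // (1 ≤ l ∧ l ≤ n) ∧ l ≠ i ∧ l ≠ j ∧ l ≠ k}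

/-- The group `F_n^3` (for the fixed triple `(i,j,k)`). -/
abbrev F3 (n i j k : ℕ) := FP2 (SIdx3 n i j k → ZMod 2 × ZMod 2)

/-- Indices `k ∈ {1,…,n} \ {i,j}`. -/
abbrev SIdx2 (n i j : ℕ) := {l : ℕ // (1 ≤ l ∧ l ≤ n) ∧ l ≠ i ∧ l ≠ j}

/-- The group `F_n^2` (for the fixed pair `(i,j)`). -/
abbrev F2 (n i j : ℕ) := FP2 (SIdx2 n i j → ZMod 2)

/-! ## The MN-invariants `w_{(i,j)}` and `w_{(i,j,k)}` -/

/-- The number of occurrences of the generator `a_{\{a,b\}}` in a word over `G_n^2`. -/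
def cnt2 {n : ℕ} (β : List (PIdx n)) (a b : ℕ) : ℕ :=
  (β.filter fun x => decide (pairSet x = ({a, b} : Finset ℕ))).length

/-- The number of occurrences of the generator `a_{\{a,b,c\}}` in a word over `G_n^3`. -/
def cnt3 {n : ℕ} (β : List (TIdx n)) (a b c : ℕ) : ℕ :=
  (β.filter fun x => decide (tripSet x = ({a, b, c} : Finset ℕ))).length

/-- `i_c` for an occurrence of `a_{ij}` with prefix `pre`: `i_c(k) = N_{ik} + N_{jk} (mod 2)`. -/
def iC2 {n : ℕ} (i j : ℕ) (pre : List (PIdx n)) : SIdx2 n i j → ZMod 2 :=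
  fun k => ((cnt2 pre i k.1 + cnt2 pre j k.1 : ℕ) : ZMod 2)

/-- The MN-invariant `w_{(i,j)}` of a word over `G_n^2`. -/
def w2 {n : ℕ} (i j : ℕ) (β : List (PIdx n)) : F2 n i j :=
  (((β.zipIdx.map Prod.swap).filter fun x => decide (pairSet x.2 = ({i, j} : Finset ℕ))).map
    fun x => (PresentedGroup.of (iC2 i j (β.take x.1)) : F2 n i j)).prod

/-- `i_c` for an occurrence of `a_{ijk}` with prefix `pre`:
`i_c(l) = (N_{jkl} + N_{ijl}, N_{ikl} + N_{ijl}) (mod 2)`. -/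
def iC3 {n : ℕ} (i j k : ℕ) (pre : List (TIdx n)) : SIdx3 n i j k → ZMod 2 × ZMod 2 :=
  fun l => (((cnt3 pre j k l.1 + cnt3 pre i j l.1 : ℕ) : ZMod 2),
            ((cnt3 pre i k l.1 + cnt3 pre i j l.1 : ℕ) : ZMod 2))

/-- The MN-invariant `w_{(i,j,k)}` of a word over `G_n^3`. -/
def w3 {n : ℕ} (i j k : ℕ) (β : List (TIdx n)) : F3 n i j k :=
  (((β.zipIdx.map Prod.swap).filter fun x => decide (tripSet x.2 = ({i, j, k} : Finset ℕ))).map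
    fun x => (PresentedGroup.of (iC3 i j k (β.take x.1)) : F3 n i j k)).prod

/-! ## Explicit words for `c^n_{i,j}` and `φ_n(b_{ij})` -/

def tripMkS (n a b c : ℕ) : Option (TIdx n) :=
  if h : T3ok n (sort3 a b c) then some ⟨sort3 a b c, h⟩ else none

def pairMkS (n a b : ℕ) : Option (PIdx n) :=
  if h : P2ok n (sort2 a b) then some ⟨sort2 a b, h⟩ else none

/-- The defining word of `c^n_{i,j}`. -/
def cWord (n i j : ℕ) : List (TIdx n) :=
  ((List.range' (j + 1) (n - j)).filterMap fun k => tripMkS n i j k) ++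
  ((List.range' 1 (j - 1)).filterMap fun k => tripMkS n i j k)

/-- The defining word of `φ_n(b_{ij})`, with the inverses of the `c`-words expanded using
`a⁻¹ = a` for generators (i.e. by reversing the words). -/
def phiWord (n i j : ℕ) : List (TIdx n) :=
  (((List.range' (i + 1) (j - 1 - i)).map fun m => (cWord n i m).reverse).flatten) ++
  cWord n i j ++ cWord n i j ++
  (((List.range' (i + 1) (j - 1 - i)).reverse.map fun m => cWord n i m).flatten)

/-! ## The group `G_{n,p}^2` (parity) -/

/-- Index type for the generators `a_{ij}^ε` of `G_{n,p}^2`. -/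
abbrev PPIdx (n : ℕ) := PIdx n × ZMod 2

def fgenP2 (n a b : ℕ) (e : ZMod 2) : FreeGroup (PPIdx n) :=
  if h : P2ok n (sort2 a b) then FreeGroup.of (⟨sort2 a b, h⟩, e) else 1

/-- The defining relators of `G_{n,p}^2`. -/
def relsP2 (n : ℕ) : Set (FreeGroup (PPIdx n)) :=
  {r | ∃ a : PPIdx n, r = .of a * .of a} ∪
  {r | ∃ (i j k l : ℕ) (e e' : ZMod 2),
      1 ≤ i ∧ i ≤ n ∧ 1 ≤ j ∧ j ≤ n ∧ 1 ≤ k ∧ k ≤ n ∧ 1 ≤ l ∧ l ≤ n ∧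
      i ≠ j ∧ i ≠ k ∧ i ≠ l ∧ j ≠ k ∧ j ≠ l ∧ k ≠ l ∧
      r = fgenP2 n i j e * fgenP2 n k l e' * (fgenP2 n i j e)⁻¹ * (fgenP2 n k l e')⁻¹} ∪
  {r | ∃ (i j k : ℕ) (e1 e2 e3 : ZMod 2),
      1 ≤ i ∧ i < j ∧ j < k ∧ k ≤ n ∧ e1 + e2 + e3 = 0 ∧
      r = fgenP2 n i j e1 * fgenP2 n i k e2 * fgenP2 n j k e3 *
          (fgenP2 n j k e3 * fgenP2 n i k e2 * fgenP2 n i j e1)⁻¹}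

/-- The group `G_{n,p}^2`. -/
abbrev GP2 (n : ℕ) := PresentedGroup (relsP2 n)

/-- The element of `G_{n,p}^2` represented by a word in the generators. -/
def toGP2 {n : ℕ} (β : List (PPIdx n)) : GP2 n :=
  (β.map fun a => (PresentedGroup.of a : GP2 n)).prod

/-! ## The parity invariant `w^p_{ij}` on `G_{n,p}^2` -/

/-- The number of occurrences of `a_{\{a,b\}}^e` in a word over `G_{n,p}^2`. -/
def cntP2 {n : ℕ} (β : List (PPIdx n)) (a b : ℕ) (e : ZMod 2) : ℕ :=
  (β.filter fun x => decide (pairSet x.1 = ({a, b} : Finset ℕ) ∧ x.2 = e)).length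

/-- `i^p_c` for an occurrence of `a_{ij}^e` with prefix `pre`. -/
def iCP2 {n : ℕ} (i j : ℕ) (e : ZMod 2) (pre : List (PPIdx n)) : SIdx2 n i j → ZMod 2 :=
  fun k =>
    if e = 0 then ((cntP2 pre i k.1 0 + cntP2 pre j k.1 0 : ℕ) : ZMod 2)
    else ((cntP2 pre i k.1 0 + cntP2 pre j k.1 1 : ℕ) : ZMod 2)

/-- The invariant `w^p_{ij}` of a word over `G_{n,p}^2`. -/
def wP2 {n : ℕ} (i j : ℕ) (β : List (PPIdx n)) : F2 n i j :=
  (((β.zipIdx.map Prod.swap).filter fun x => decide (pairSet x.2.1 = ({i, j} : Finset ℕ))).map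
    fun x => (PresentedGroup.of (iCP2 i j x.2.2 (β.take x.1)) : F2 n i j)).prod

/-! ## The map `ψ_l : G_{n+1}^2 → G_{n,p}^2` -/

/-- The word over `G_{n,p}^2` obtained from a word over `G_{n+1}^2` by deleting the strand `l`
and recording parities. -/
def psiWord (n l : ℕ) (β : List (PIdx (n + 1))) : List (PPIdx n) :=
  (β.zipIdx.map Prod.swap).filterMap fun x =>
    if l = x.2.1.1 ∨ l = x.2.1.2 then none
    else (pairMkS n (del l x.2.1.1) (del l x.2.1.2)).map fun p =>
      (p, ((cnt2 (β.take x.1) x.2.1.1 l + cnt2 (β.take x.1) x.2.1.2 l : ℕ) : ZMod 2))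

/-! ## The group `G_{n,p}^3` (parity) -/

/-- Index type for the generators `a_{ijk}^ε` of `G_{n,p}^3`. -/
abbrev TPIdx (n : ℕ) := TIdx n × ZMod 2

def fgenP3 (n a b c : ℕ) (e : ZMod 2) : FreeGroup (TPIdx n) :=
  if h : T3ok n (sort3 a b c) then FreeGroup.of (⟨sort3 a b c, h⟩, e) else 1

/-- The defining relators of `G_{n,p}^3`. -/
def relsP3 (n : ℕ) : Set (FreeGroup (TPIdx n)) :=
  {r | ∃ a : TPIdx n, r = .of a * .of a} ∪
  {r | ∃ a b : TPIdx n, (tripSet a.1 ∩ tripSet b.1).card < 2 ∧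
      r = (.of a * .of b) ^ 2} ∪
  {r | ∃ (i j k l : ℕ) (ei ej ek el : ZMod 2),
      1 ≤ i ∧ i ≤ n ∧ 1 ≤ j ∧ j ≤ n ∧ 1 ≤ k ∧ k ≤ n ∧ 1 ≤ l ∧ l ≤ n ∧
      i ≠ j ∧ i ≠ k ∧ i ≠ l ∧ j ≠ k ∧ j ≠ l ∧ k ≠ l ∧
      (if max (max i j) (max k l) = i then ej + ek + el
       else if max (max i j) (max k l) = j then ei + ek + el
       else if max (max i j) (max k l) = k then ei + ej + el
       else ei + ej + ek) = 0 ∧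
      r = (fgenP3 n i j k el * fgenP3 n i j l ek * fgenP3 n i k l ej * fgenP3 n j k l ei) ^ 2}

/-- The group `G_{n,p}^3`. -/
abbrev GP3 (n : ℕ) := PresentedGroup (relsP3 n)

/-- The element of `G_{n,p}^3` represented by a word in the generators. -/
def toGP3 {n : ℕ} (β : List (TPIdx n)) : GP3 n :=
  (β.map fun a => (PresentedGroup.of a : GP3 n)).prod

/-! ## The map `f : G_{n+1}^3 → G_{n,p}^3` -/

/-- The word over `G_{n,p}^3` obtained from a word over `G_{n+1}^3` by deleting the letters
containing the index `n+1` and recording parities. -/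
def fWord (n : ℕ) (β : List (TIdx (n + 1))) : List (TPIdx n) :=
  (β.zipIdx.map Prod.swap).filterMap fun x =>
    if x.2.1.2.2 = n + 1 then none
    else (tripMkS n x.2.1.1 x.2.1.2.1 x.2.1.2.2).map fun t =>
      (t, ((cnt3 (β.take x.1) x.2.1.2.1 x.2.1.2.2 (n + 1) +
            cnt3 (β.take x.1) x.2.1.1 x.2.1.2.2 (n + 1) : ℕ) : ZMod 2))

/-! ## The parity invariant `w^p_{ijk}` on `G_{n,p}^3` -/

/-- The group `F_n^3` with values in `ℤ/2` (for the parity invariant). -/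
abbrev F3p (n i j k : ℕ) := FP2 (SIdx3 n i j k → ZMod 2)

/-- The number of occurrences of `a_{\{a,b,c\}}^e` in a word over `G_{n,p}^3`. -/
def cntP3 {n : ℕ} (β : List (TPIdx n)) (a b c : ℕ) (e : ZMod 2) : ℕ :=
  (β.filter fun x => decide (tripSet x.1 = ({a, b, c} : Finset ℕ) ∧ x.2 = e)).length

/-- `i^p_c` for an occurrence of `a_{ijk}^e` with prefix `pre` (here `k > i, j`). -/
def iCP3 {n : ℕ} (i j k : ℕ) (e : ZMod 2) (pre : List (TPIdx n)) : SIdx3 n i j k → ZMod 2 :=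
  fun l =>
    if e = 0 then
      (if k < l.1 then
        ((cntP3 pre i k l.1 0 + cntP3 pre j k l.1 0 + cntP3 pre i j l.1 1 : ℕ) : ZMod 2)
      else ((cntP3 pre i k l.1 0 + cntP3 pre j k l.1 0 : ℕ) : ZMod 2))
    else
      (if k < l.1 then
        ((cntP3 pre i k l.1 0 + cntP3 pre j k l.1 1 + cntP3 pre i j l.1 0 : ℕ) : ZMod 2)
      else ((cntP3 pre i k l.1 0 + cntP3 pre j k l.1 1 : ℕ) : ZMod 2))

/-- The invariant `w^p_{ijk}` of a word over `G_{n,p}^3`. -/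
def wP3 {n : ℕ} (i j k : ℕ) (β : List (TPIdx n)) : F3p n i j k :=
  (((β.zipIdx.map Prod.swap).filter fun x => decide (tripSet x.2.1 = ({i, j, k} : Finset ℕ))).map
    fun x => (PresentedGroup.of (iCP3 i j k x.2.2 (β.take x.1)) : F3p n i j k)).prod


namespace FP2

variable {ι : Type} {G : Type*} [Group G]

theorem of_mul_self (x : ι) : (PresentedGroup.of x : FP2 ι) * PresentedGroup.of x = 1 :=
  (map_mul (PresentedGroup.mk _) _ _).symm.trans (PresentedGroup.one_of_mem ⟨x, rfl⟩)

def lift (f : ι → G) (hf : ∀ x, f x * f x = 1) : FP2 ι →* G :=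
  PresentedGroup.toGroup (f := f) (by rintro _ ⟨x, rfl⟩; simpa using hf x)

@[simp]
theorem lift_of (f : ι → G) (hf : ∀ x, f x * f x = 1) (x : ι) :
    lift f hf (PresentedGroup.of x) = f x :=
  PresentedGroup.toGroup.of _

variable {A : Type} [AddGroup A]

def translateHom (a : A) : FP2 A →* FP2 A :=
  lift (fun σ => PresentedGroup.of (a + σ)) fun _ => of_mul_self _

theorem translateHom_comp (a b : A) :
    (translateHom a).comp (translateHom b) = translateHom (a + b) :=
  PresentedGroup.ext fun σ => by simp [translateHom, add_assoc]

theorem translateHom_zero : translateHom (0 : A) = MonoidHom.id _ :=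
  PresentedGroup.ext fun σ => by simp [translateHom]

def translate : Multiplicative A →* MulAut (FP2 A) where
  toFun s := (translateHom s.toAdd).toMulEquiv (translateHom (-s.toAdd))
    (by rw [translateHom_comp, neg_add_cancel, translateHom_zero])
    (by rw [translateHom_comp, add_neg_cancel, translateHom_zero])
  map_one' := MulEquiv.ext fun x => congr($translateHom_zero x)
  map_mul' s t := MulEquiv.ext fun x => congr($(translateHom_comp s.toAdd t.toAdd) x).symm

theorem translate_of (s : Multiplicative A) (σ : A) :
    translate s (PresentedGroup.of σ) = PresentedGroup.of (s.toAdd + σ) := by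
  simp [translate, translateHom]

end FP2

theorem sum_erase_eq_indicator {α R : Type*} [DecidableEq α] [AddCommMonoidWithOne R]
    {Q X : Finset α} (hcard : X.card + 1 = Q.card) :
    ∑ w ∈ Q, (if Q.erase w = X then 1 else 0 : R) = if X ⊆ Q then 1 else 0 := by
  by_cases hX : X ⊆ Q
  · obtain ⟨w₀, hw₀⟩ : ∃ w₀, Q \ X = {w₀} :=
      Finset.card_eq_one.1 (by rw [Finset.card_sdiff_of_subset hX]; omega)
    obtain ⟨hw₀Q, hw₀X⟩ := Finset.mem_sdiff.1 (hw₀ ▸ Finset.mem_singleton_self w₀)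
    have herase : ∀ w ∈ Q, Q.erase w = X ↔ w = w₀ := by
      refine fun w hw => ⟨fun h => ?_, fun h => ?_⟩
      · have : w ∈ Q \ X := Finset.mem_sdiff.2 ⟨hw, h ▸ Finset.notMem_erase w Q⟩
        simpa [hw₀] using this
      · subst h
        refine (Finset.eq_of_subset_of_card_le (fun x hx => ?_) ?_).symm
        · exact Finset.mem_erase.2 ⟨fun h => hw₀X (h ▸ hx), hX hx⟩
        · rw [Finset.card_erase_of_mem hw]; omega
    rw [Finset.sum_congr rfl fun w hw => if_congr (herase w hw) rfl rfl,
      Finset.sum_ite_eq' Q w₀, if_pos hw₀Q, if_pos hX]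
  · rw [if_neg hX]
    exact Finset.sum_eq_zero fun w _ =>
      if_neg fun (h : Q.erase w = X) => hX (h ▸ Finset.erase_subset w Q)

theorem sum_erase_four {M : Type*} [AddCommMonoid M] (f : Finset ℕ → M) {p q r s : ℕ}
    (hpq : p ≠ q) (hpr : p ≠ r) (hps : p ≠ s) (hqr : q ≠ r) (hqs : q ≠ s) (hrs : r ≠ s) :
    ∑ w ∈ ({p, q, r, s} : Finset ℕ), f (({p, q, r, s} : Finset ℕ).erase w) =
      f {p, q, r} + f {p, q, s} + f {p, r, s} + f {q, r, s} := by
  simp [Finset.sum_insert, Finset.erase_insert_of_ne, hpq, hpr, hps, hqr, hqs, hrs]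
  abel

theorem palindrome_of_mul_eq_one {G K : Type*} [Group G] [CommGroup K] (f : K →* G)
    (hK : ∀ x : K, x * x = 1) (e : G) {a b c : K} (h : a * b * c = 1) :
    e * f a * f b * f c = f c * f b * f a * e ∧ f a * e * f b * f c = f c * f b * e * f a ∧
      f a * f b * e * f c = f c * e * f b * f a ∧ f a * f b * f c * e = e * f c * f b * f a := by
  have hinv : ∀ x : K, x⁻¹ = x := fun x => inv_eq_of_mul_eq_one_right (hK x)
  have hab : a * b = c := by rw [← hinv c]; exact eq_inv_of_mul_eq_one_left h
  have hbc : b * c = a := by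
    rw [← hinv a]; exact eq_inv_of_mul_eq_one_right (by rw [← mul_assoc, h])
  have hcba : c * b * a = 1 := by rw [mul_comm c, hbc, hK]
  refine ⟨?_, ?_, ?_, ?_⟩
  · calc e * f a * f b * f c = e * f (a * b * c) := by simp [mul_assoc]
      _ = f (c * b * a) * e := by rw [h, hcba, map_one, one_mul, mul_one]
      _ = _ := by simp
  · calc f a * e * f b * f c = f a * e * f (b * c) := by simp [mul_assoc]
      _ = f (c * b) * e * f a := by rw [hbc, mul_comm c, hbc]
      _ = _ := by simp
  · calc f a * f b * e * f c = f (a * b) * e * f c := by simp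
      _ = f c * e * f (b * a) := by rw [hab, mul_comm b, hab]
      _ = _ := by simp [mul_assoc]
  · calc f a * f b * f c * e = f (a * b * c) * e := by simp
      _ = e * f (c * b * a) := by rw [h, hcba, map_one, one_mul, mul_one]
      _ = _ := by simp [mul_assoc]

theorem prod_map_inv_mul_prod_reverse_map {G : Type*} [Group G] (l : List ℕ) (g : ℕ → G) :
    (l.map fun x => (g x)⁻¹).prod * (l.reverse.map g).prod = 1 := by
  rw [List.map_reverse, List.prod_reverse_noncomm, List.map_map]
  exact mul_inv_cancel _

theorem mul_self_eq_one_of_zmod_two {ι : Type} (s : Multiplicative (ι → ZMod 2 × ZMod 2)) :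
    s * s = 1 :=
  funext fun _ => Prod.ext (CharTwo.add_self_eq_zero _) (CharTwo.add_self_eq_zero _)

section WeightGroup

variable (n i j k : ℕ)

abbrev WeightGroup :=
  F3 n i j k ⋊[FP2.translate] Multiplicative (SIdx3 n i j k → ZMod 2 × ZMod 2)

/-- The change of `i_c` caused by one more occurrence of `a_T` before `c`. -/
def shift (T : Finset ℕ) : SIdx3 n i j k → ZMod 2 × ZMod 2 := fun l =>
  ((if T = {j, k, l.1} then 1 else 0) + (if T = {i, j, l.1} then 1 else 0),
   (if T = {i, k, l.1} then 1 else 0) + (if T = {i, j, l.1} then 1 else 0))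

def letterImage (T : Finset ℕ) : WeightGroup n i j k :=
  if T = {i, j, k} then .inl (.of 0) else .inr (.ofAdd (shift n i j k T))

variable {n i j k}

theorem shift_self : shift n i j k {i, j, k} = 0 := by
  funext l
  obtain ⟨l, -, hl⟩ := l
  have hne : ∀ x y, ({i, j, k} : Finset ℕ) ≠ {x, y, l} := fun x y h => by
    have : l ∈ ({i, j, k} : Finset ℕ) := h ▸ by simp
    simp at this; tauto
  simp [shift, hne]

theorem shift_eq_zero_of_card_inter_lt_two (hij : i ≠ j) (hik : i ≠ k) (hjk : j ≠ k)
    {T : Finset ℕ} (h : (T ∩ {i, j, k}).card < 2) : shift n i j k T = 0 := by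
  have hne : ∀ x ∈ ({i, j, k} : Finset ℕ), ∀ y ∈ ({i, j, k} : Finset ℕ), x ≠ y →
      ∀ z, T ≠ {x, y, z} := by
    rintro x hx y hy hxy z rfl
    refine h.not_ge ((Finset.card_pair hxy).symm.trans_le (Finset.card_le_card ?_))
    intro w hw
    simp only [Finset.mem_insert, Finset.mem_singleton] at hw
    rcases hw with rfl | rfl <;> simp_all
  funext l
  simp [shift, hne j (by simp) k (by simp) hjk, hne i (by simp) j (by simp) hij,
    hne i (by simp) k (by simp) hik]

/-- The three faces other than `{i, j, k}` shift the coordinate of the fourth point by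
`(1,0)`, `(0,1)` and `(1,1)`. -/
theorem sum_shift_erase_eq_zero (hij : i ≠ j) (hik : i ≠ k) (hjk : j ≠ k) {Q : Finset ℕ}
    (hQ : Q.card = 4) (hA : {i, j, k} ⊆ Q) : ∑ w ∈ Q, shift n i j k (Q.erase w) = 0 := by
  funext l
  obtain ⟨l, -, hli, hlj, hlk⟩ := l
  have hface : ∀ x ∈ ({i, j, k} : Finset ℕ), ∀ y ∈ ({i, j, k} : Finset ℕ), x ≠ y →
      x ≠ l → y ≠ l → ∑ w ∈ Q, (if Q.erase w = {x, y, l} then 1 else 0 : ZMod 2) =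
        if l ∈ Q then 1 else 0 := by
    intro x hx y hy hxy hxl hyl
    rw [sum_erase_eq_indicator (by
      rw [hQ, Finset.card_eq_three.2 ⟨x, y, l, hxy, hxl, hyl, rfl⟩])]
    simp [Finset.insert_subset_iff, hA hx, hA hy]
  simp only [shift, Finset.sum_apply, Pi.zero_apply]
  refine Prod.ext ?_ ?_ <;>
    simp only [Prod.fst_sum, Prod.snd_sum, Finset.sum_add_distrib, Prod.fst_zero, Prod.snd_zero]
  · rw [hface j (by simp) k (by simp) hjk (by omega) (by omega),
      hface i (by simp) j (by simp) hij (by omega) (by omega), CharTwo.add_self_eq_zero]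
  · rw [hface i (by simp) k (by simp) hik (by omega) (by omega),
      hface i (by simp) j (by simp) hij (by omega) (by omega), CharTwo.add_self_eq_zero]

theorem letterImage_left (T : Finset ℕ) :
    (letterImage n i j k T).left = if T = {i, j, k} then .of 0 else 1 := by
  unfold letterImage; split_ifs <;> rfl

theorem letterImage_right (T : Finset ℕ) :
    (letterImage n i j k T).right = .ofAdd (shift n i j k T) := by
  unfold letterImage; split_ifs with h
  · rw [h, shift_self]; rfl
  · rfl

theorem letterImage_of_ne {T : Finset ℕ} (h : T ≠ {i, j, k}) :
    letterImage n i j k T = .inr (.ofAdd (shift n i j k T)) :=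
  if_neg h

theorem letterImage_mul_self (T : Finset ℕ) :
    letterImage n i j k T * letterImage n i j k T = 1 := by
  unfold letterImage; split_ifs
  · rw [← map_mul, FP2.of_mul_self, map_one]
  · rw [← map_mul, mul_self_eq_one_of_zmod_two, map_one]

theorem letterImage_commute (hij : i ≠ j) (hik : i ≠ k) (hjk : j ≠ k) {T T' : Finset ℕ}
    (h : (T ∩ T').card < 2) : Commute (letterImage n i j k T) (letterImage n i j k T') := by
  have eq_one : ∀ {T'}, T' ≠ {i, j, k} → (T' ∩ {i, j, k}).card < 2 →
      letterImage n i j k T' = 1 := fun hT' h => by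
    rw [letterImage_of_ne hT', shift_eq_zero_of_card_inter_lt_two hij hik hjk h, ofAdd_zero,
      map_one]
  by_cases hT : T = {i, j, k} <;> by_cases hT' : T' = {i, j, k}
  · rw [hT, hT']
  · rw [eq_one hT' (by rwa [Finset.inter_comm, ← hT])]; exact Commute.one_right _
  · rw [eq_one hT (by rwa [← hT'])]; exact Commute.one_left _
  · rw [letterImage_of_ne hT, letterImage_of_ne hT']
    exact (Commute.all _ _).map _

theorem letterImage_palindrome {T₁ T₂ T₃ T₄ : Finset ℕ} (h₁₂ : T₁ ≠ T₂) (h₁₃ : T₁ ≠ T₃)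
    (h₁₄ : T₁ ≠ T₄) (h₂₃ : T₂ ≠ T₃) (h₂₄ : T₂ ≠ T₄) (h₃₄ : T₃ ≠ T₄)
    (hsum : T₁ = {i, j, k} ∨ T₂ = {i, j, k} ∨ T₃ = {i, j, k} ∨ T₄ = {i, j, k} →
      shift n i j k T₁ + shift n i j k T₂ + shift n i j k T₃ + shift n i j k T₄ = 0) :
    letterImage n i j k T₁ * letterImage n i j k T₂ * letterImage n i j k T₃ *
        letterImage n i j k T₄ =
      letterImage n i j k T₄ * letterImage n i j k T₃ * letterImage n i j k T₂ *
        letterImage n i j k T₁ := by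
  have palindrome := fun {a b c : SIdx3 n i j k → ZMod 2 × ZMod 2} (h : a + b + c = 0) =>
    palindrome_of_mul_eq_one SemidirectProduct.inr mul_self_eq_one_of_zmod_two
      (letterImage n i j k {i, j, k}) (a := .ofAdd a) (b := .ofAdd b) (c := .ofAdd c)
      (by rw [← ofAdd_add, ← ofAdd_add, h, ofAdd_zero])
  by_cases h₁ : T₁ = {i, j, k}
  · have hA := hsum (Or.inl h₁)
    rw [h₁, shift_self, zero_add] at hA
    rw [letterImage_of_ne (T := T₂) fun h => h₁₂ (h₁.trans h.symm),
      letterImage_of_ne (T := T₃) fun h => h₁₃ (h₁.trans h.symm),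
      letterImage_of_ne (T := T₄) fun h => h₁₄ (h₁.trans h.symm), h₁]
    exact (palindrome hA).1
  by_cases h₂ : T₂ = {i, j, k}
  · have hA := hsum (Or.inr (Or.inl h₂))
    rw [h₂, shift_self, add_zero] at hA
    rw [letterImage_of_ne h₁, letterImage_of_ne (T := T₃) fun h => h₂₃ (h₂.trans h.symm),
      letterImage_of_ne (T := T₄) fun h => h₂₄ (h₂.trans h.symm), h₂]
    exact (palindrome hA).2.1
  by_cases h₃ : T₃ = {i, j, k}
  · have hA := hsum (Or.inr (Or.inr (Or.inl h₃)))
    rw [h₃, shift_self, add_zero] at hA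
    rw [letterImage_of_ne h₁, letterImage_of_ne h₂,
      letterImage_of_ne (T := T₄) fun h => h₃₄ (h₃.trans h.symm), h₃]
    exact (palindrome hA).2.2.1
  by_cases h₄ : T₄ = {i, j, k}
  · have hA := hsum (Or.inr (Or.inr (Or.inr h₄)))
    rw [h₄, shift_self, add_zero] at hA
    rw [letterImage_of_ne h₁, letterImage_of_ne h₂, letterImage_of_ne h₃, h₄]
    exact (palindrome hA).2.2.2
  rw [letterImage_of_ne h₁, letterImage_of_ne h₂, letterImage_of_ne h₃, letterImage_of_ne h₄]
  simp only [← map_mul, ← ofAdd_add]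
  exact congrArg (fun x => SemidirectProduct.inr (Multiplicative.ofAdd x)) (by abel)

theorem letterImage_tetra (hij : i ≠ j) (hik : i ≠ k) (hjk : j ≠ k) {p q r s : ℕ}
    (hpq : p ≠ q) (hpr : p ≠ r) (hps : p ≠ s) (hqr : q ≠ r) (hqs : q ≠ s) (hrs : r ≠ s) :
    letterImage n i j k {p, q, r} * letterImage n i j k {p, q, s} *
        letterImage n i j k {p, r, s} * letterImage n i j k {q, r, s} =
      letterImage n i j k {q, r, s} * letterImage n i j k {p, r, s} *
        letterImage n i j k {p, q, s} * letterImage n i j k {p, q, r} := by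
  have hQ : ({p, q, r, s} : Finset ℕ).card = 4 := by simp [Finset.card_insert_of_notMem, *]
  refine letterImage_palindrome
    (ne_of_mem_of_not_mem' (a := s) (by simp) (by simp; omega)).symm
    (ne_of_mem_of_not_mem' (a := s) (by simp) (by simp; omega)).symm
    (ne_of_mem_of_not_mem' (a := s) (by simp) (by simp; omega)).symm
    (ne_of_mem_of_not_mem' (a := r) (by simp) (by simp; omega)).symm
    (ne_of_mem_of_not_mem' (a := r) (by simp) (by simp; omega)).symm
    (ne_of_mem_of_not_mem' (a := q) (by simp) (by simp; omega)).symm fun hA => ?_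
  rw [← sum_erase_four (shift n i j k) hpq hpr hps hqr hqs hrs]
  refine sum_shift_erase_eq_zero hij hik hjk hQ ?_
  rcases hA with h | h | h | h <;> rw [← h] <;> intro x <;> simp <;> tauto

theorem tripSet_mk {a b c : ℕ} (h : T3ok n (sort3 a b c)) :
    tripSet (⟨sort3 a b c, h⟩ : TIdx n) = {a, b, c} := by
  ext x
  simp only [tripSet, sort3, Finset.mem_insert, Finset.mem_singleton]
  omega

theorem lift_fgen3 {G : Type*} [Group G] (f : Finset ℕ → G) {a b c : ℕ} (ha : 1 ≤ a ∧ a ≤ n)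
    (hb : 1 ≤ b ∧ b ≤ n) (hc : 1 ≤ c ∧ c ≤ n) (hab : a ≠ b) (hac : a ≠ c) (hbc : b ≠ c) :
    FreeGroup.lift (fun t : TIdx n => f (tripSet t)) (fgen3 n a b c) = f {a, b, c} := by
  have h : T3ok n (sort3 a b c) := by simp only [T3ok, sort3]; omega
  rw [fgen3, dif_pos h, FreeGroup.lift_apply_of, tripSet_mk]

variable (n) in
def w3Hom (hij : i ≠ j) (hik : i ≠ k) (hjk : j ≠ k) : G3 n →* WeightGroup n i j k :=
  PresentedGroup.toGroup (f := fun t => letterImage n i j k (tripSet t)) <| by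
    rintro _ ((⟨a, rfl⟩ | ⟨a, b, hab, rfl⟩) | ⟨p, q, r, s, hp, hp', hq, hq', hr, hr', hs, hs',
      hpq, hpr, hps, hqr, hqs, hrs, rfl⟩)
    · simpa using letterImage_mul_self _
    · simp only [map_mul, map_inv, FreeGroup.lift_apply_of]
      rw [(letterImage_commute hij hik hjk hab).eq]
      group
    · simp only [map_mul, map_inv, lift_fgen3 _ ⟨hp, hp'⟩ ⟨hq, hq'⟩ ⟨hr, hr'⟩ hpq hpr hqr,
        lift_fgen3 _ ⟨hp, hp'⟩ ⟨hq, hq'⟩ ⟨hs, hs'⟩ hpq hps hqs,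
        lift_fgen3 _ ⟨hp, hp'⟩ ⟨hr, hr'⟩ ⟨hs, hs'⟩ hpr hps hrs,
        lift_fgen3 _ ⟨hq, hq'⟩ ⟨hr, hr'⟩ ⟨hs, hs'⟩ hqr hqs hrs]
      rw [mul_inv_eq_one]
      exact letterImage_tetra hij hik hjk hpq hpr hps hqr hqs hrs

theorem w3Hom_of (hij : i ≠ j) (hik : i ≠ k) (hjk : j ≠ k) (t : TIdx n) :
    w3Hom n hij hik hjk (PresentedGroup.of t) = letterImage n i j k (tripSet t) :=
  PresentedGroup.toGroup.of _

theorem cnt3_cons (t : TIdx n) (pre : List (TIdx n)) (a b c : ℕ) :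
    cnt3 (t :: pre) a b c = (if tripSet t = {a, b, c} then 1 else 0) + cnt3 pre a b c := by
  by_cases h : tripSet t = {a, b, c} <;> simp [cnt3, h, add_comm]

theorem iC3_cons (t : TIdx n) (pre : List (TIdx n)) :
    iC3 i j k (t :: pre) = shift n i j k (tripSet t) + iC3 i j k pre := by
  funext l
  simp only [iC3, cnt3_cons, shift, Pi.add_apply, Prod.mk_add_mk]
  push_cast
  exact Prod.ext (by ring) (by ring)

theorem w3_cons (t : TIdx n) (γ : List (TIdx n)) :
    w3 i j k (t :: γ) = (letterImage n i j k (tripSet t)).left *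
      FP2.translate (.ofAdd (shift n i j k (tripSet t))) (w3 i j k γ) := by
  have hzip : (t :: γ).zipIdx.map Prod.swap =
      (0, t) :: (γ.zipIdx.map Prod.swap).map (Prod.map (· + 1) id) := by
    simp [List.zipIdx_succ, Function.comp_def]
  have hcons : ∀ pre : List (TIdx n),
      (PresentedGroup.of (iC3 i j k (t :: pre)) : F3 n i j k) =
        FP2.translate (.ofAdd (shift n i j k (tripSet t))) (.of (iC3 i j k pre)) :=
    fun pre => by rw [iC3_cons, FP2.translate_of]; rfl
  have hnil : iC3 i j k ([] : List (TIdx n)) = 0 := by funext; simp [iC3, cnt3]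
  rw [w3, w3, hzip, List.filter_cons, List.filter_map, map_list_prod, List.map_map,
    letterImage_left]
  by_cases h : tripSet t = {i, j, k} <;> simp [Function.comp_def, h, hcons, hnil]

theorem w3_eq_w3Hom_left (hij : i ≠ j) (hik : i ≠ k) (hjk : j ≠ k) (γ : List (TIdx n)) :
    w3 i j k γ = (w3Hom n hij hik hjk (toG3 γ)).left := by
  induction γ with
  | nil => simp [w3, toG3]
  | cons t γ ih =>
    rw [toG3, List.map_cons, List.prod_cons, ← toG3, map_mul, SemidirectProduct.mul_left,
      w3Hom_of, letterImage_right, ← ih, w3_cons]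

theorem w3Hom_phiElt_eq_one (hij : i ≠ j) (hik : i ≠ k) (hjk : j ≠ k) {m a b : ℕ}
    (hm : m = a ∨ m = b) (hmA : m ∉ ({i, j, k} : Finset ℕ)) :
    w3Hom n hij hik hjk (phiElt n a b) = 1 := by
  have hletter : ∀ c, w3Hom n hij hik hjk (ggen3 n a b c) ∈ (SemidirectProduct.inr).range := by
    intro c
    unfold ggen3
    split_ifs with h
    · rw [w3Hom_of, tripSet_mk h, letterImage_of_ne fun hT => hmA (hT ▸ by simp; tauto)]
      exact ⟨_, rfl⟩
    · rw [map_one]; exact Subgroup.one_mem _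
  obtain ⟨s, hs⟩ : w3Hom n hij hik hjk (cElt n a b) ∈ (SemidirectProduct.inr).range := by
    simp only [cElt, map_mul, map_list_prod, List.map_map]
    exact Subgroup.mul_mem _
      (Subgroup.list_prod_mem _ (List.forall_mem_map.2 fun c _ => hletter c))
      (Subgroup.list_prod_mem _ (List.forall_mem_map.2 fun c _ => hletter c))
  have hsq : w3Hom n hij hik hjk (cElt n a b) ^ 2 = 1 := by
    rw [← hs, ← map_pow, pow_two, mul_self_eq_one_of_zmod_two, map_one]
  rw [phiElt, map_mul, map_mul, map_pow, hsq, mul_one, ← map_mul,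
    prod_map_inv_mul_prod_reverse_map, map_one]

end WeightGroup

def succAbove (m x : ℕ) : ℕ := if x < m then x else x + 1

theorem strictMono_succAbove (m : ℕ) : StrictMono (succAbove m) := by
  intro x y h; unfold succAbove; split_ifs <;> omega

theorem succAbove_del {m x : ℕ} (h : m ≠ x) : succAbove m (del m x) = x := by
  unfold succAbove del; split_ifs <;> omega

theorem mk_fgen2 (n a b : ℕ) : PresentedGroup.mk (relsPB n) (fgen2 n a b) = pbgen n a b := by
  unfold fgen2 pbgen; split_ifs <;> rfl

theorem pbgen_eq_of {n a b : ℕ} (h : P2ok n (a, b)) :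
    pbgen n a b = PresentedGroup.of ⟨(a, b), h⟩ := by
  have hs : sort2 a b = (a, b) := by simp [sort2, h.2.1.le]
  simp only [pbgen, hs, dif_pos h]

section StrandMap

variable {n n' : ℕ} {e : ℕ → ℕ}

theorem P2ok.map (he : StrictMono e) (hn : e n' ≤ n) {a b : ℕ} (h : P2ok n' (a, b)) :
    P2ok n (e a, e b) :=
  ⟨h.1.trans (he.id_le a), he h.2.1, (he.monotone h.2.2).trans hn⟩

theorem lift_fgen2 {a b : ℕ} (h : P2ok n' (a, b)) :
    FreeGroup.lift (fun p : PIdx n' => fgen2 n (e p.1.1) (e p.1.2)) (fgen2 n' a b) =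
      fgen2 n (e a) (e b) := by
  have hs : sort2 a b = (a, b) := by simp [sort2, h.2.1.le]
  simp only [fgen2, hs, dif_pos h, FreeGroup.lift_apply_of]

theorem lift_mem_relsPB (he : StrictMono e) (hn : e n' ≤ n) {r : FreeGroup (PIdx n')}
    (hr : r ∈ relsPB n') :
    FreeGroup.lift (fun p : PIdx n' => fgen2 n (e p.1.1) (e p.1.2)) r ∈ relsPB n := by
  have L := fun {a b : ℕ} (h : P2ok n' (a, b)) => lift_fgen2 (n := n) (e := e) h
  have ok := fun {a b : ℕ} (h : P2ok n' (a, b)) => h.map he hn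
  rcases hr with ((⟨a, b, c, d, hab, hcd, h, rfl⟩ | ⟨a, b, c, h1, hab, hbc, hc, rfl⟩) |
    ⟨a, b, c, h1, hab, hbc, hc, rfl⟩) | ⟨a, b, c, d, h1, hab, hbc, hcd, hd, rfl⟩
  · refine Or.inl (Or.inl (Or.inl ⟨e a, e b, e c, e d, ok hab, ok hcd, ?_, ?_⟩))
    · rcases h with h | ⟨h, h'⟩
      exacts [Or.inl (he h), Or.inr ⟨he h, he h'⟩]
    · simp only [map_mul, map_inv, L hab, L hcd]
  · have hab' : P2ok n' (a, b) := ⟨h1, hab, by omega⟩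
    have hbc' : P2ok n' (b, c) := ⟨by omega, hbc, hc⟩
    have hac' : P2ok n' (a, c) := ⟨h1, by omega, hc⟩
    refine Or.inl (Or.inl (Or.inr
      ⟨e a, e b, e c, (ok hab').1, he hab, he hbc, (ok hbc').2.2, ?_⟩))
    simp only [map_mul, map_inv, L hab', L hbc', L hac']
  · have hab' : P2ok n' (a, b) := ⟨h1, hab, by omega⟩
    have hbc' : P2ok n' (b, c) := ⟨by omega, hbc, hc⟩
    have hac' : P2ok n' (a, c) := ⟨h1, by omega, hc⟩
    refine Or.inl (Or.inr ⟨e a, e b, e c, (ok hab').1, he hab, he hbc, (ok hbc').2.2, ?_⟩)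
    simp only [map_mul, map_inv, L hab', L hbc', L hac']
  · have had : P2ok n' (a, d) := ⟨h1, by omega, hd⟩
    have hbd : P2ok n' (b, d) := ⟨by omega, by omega, hd⟩
    have hac : P2ok n' (a, c) := ⟨h1, by omega, by omega⟩
    have hcd' : P2ok n' (c, d) := ⟨by omega, hcd, hd⟩
    refine Or.inr ⟨e a, e b, e c, e d, (ok had).1, he hab, he hbc, he hcd, (ok had).2.2, ?_⟩
    simp only [map_mul, map_inv, L had, L hbd, L hac, L hcd']

variable (e) in
def pbMap (he : StrictMono e) (hn : e n' ≤ n) : PB n' →* PB n :=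
  PresentedGroup.toGroup (f := fun p => pbgen n (e p.1.1) (e p.1.2)) fun r hr => by
    have hlift : FreeGroup.lift (fun p : PIdx n' => pbgen n (e p.1.1) (e p.1.2)) =
        (PresentedGroup.mk (relsPB n)).comp
          (FreeGroup.lift fun p : PIdx n' => fgen2 n (e p.1.1) (e p.1.2)) :=
      FreeGroup.ext_hom _ _ fun p => by simp [mk_fgen2]
    rw [hlift, MonoidHom.comp_apply]
    exact PresentedGroup.one_of_mem (lift_mem_relsPB he hn hr)

theorem pbMap_pbgen (he : StrictMono e) (hn : e n' ≤ n) {a b : ℕ} (h : P2ok n' (a, b)) :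
    pbMap e he hn (pbgen n' a b) = pbgen n (e a) (e b) := by
  rw [pbgen_eq_of h]
  exact PresentedGroup.toGroup.of _

end StrandMap

theorem w3Hom_phi_eq_one_of_deletion_eq_one {n i j k m : ℕ} (hij : i ≠ j) (hik : i ≠ k)
    (hjk : j ≠ k) {p : PB n →* PB (n - 1)} (hp : IsShiftPB n m p) {φ : PB n →* G3 n}
    (hφ : IsPhi n φ) (hm : 1 ≤ m ∧ m ≤ n) (hmA : m ∉ ({i, j, k} : Finset ℕ)) {β : PB n}
    (hβ : p β = 1) : w3Hom n hij hik hjk (φ β) = 1 := by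
  have hn : succAbove m (n - 1) ≤ n := by unfold succAbove; split_ifs <;> omega
  set χ := pbMap (succAbove m) (strictMono_succAbove m) hn
  have hfactor : (w3Hom n hij hik hjk).comp φ =
      (((w3Hom n hij hik hjk).comp φ).comp χ).comp p := by
    refine PresentedGroup.ext fun ⟨(a, b), hab⟩ => ?_
    simp only [MonoidHom.comp_apply]
    rw [← pbgen_eq_of hab, hp a b hab.1 hab.2.1 hab.2.2]
    split_ifs with hmab
    · rw [map_one, map_one, map_one, hφ a b hab.1 hab.2.1 hab.2.2,
        w3Hom_phiElt_eq_one hij hik hjk hmab hmA]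
    · have hdel : P2ok (n - 1) (del m a, del m b) := by
        simp only [P2ok, del]; split_ifs <;> omega
      rw [pbMap_pbgen _ _ hdel, succAbove_del (by omega), succAbove_del (by omega)]
  rw [← MonoidHom.comp_apply, hfactor, MonoidHom.comp_apply, hβ, map_one]

theorem statement_9_general (n : ℕ) (hn : 4 ≤ n)
    (p : ℕ → (PB n →* PB (n - 1))) (hp : ∀ m, 1 ≤ m → m ≤ n → IsShiftPB n m (p m))
    (φ : PB n →* G3 n) (hφ : IsPhi n φ)
    (β : PB n) (hβ : ∀ m, 1 ≤ m → m ≤ n → p m β = 1)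
    (i j k : ℕ)
    (hij : i ≠ j) (hik : i ≠ k) (hjk : j ≠ k)
    (γ : List (TIdx n)) (hγ : toG3 γ = φ β) :
    w3 i j k γ = 1 := by
  obtain ⟨m, hm, hmA⟩ := Finset.exists_mem_notMem_of_card_lt_card
    (Finset.card_le_three.trans_lt (by simp : 3 < (Finset.Icc 1 4).card))
  rw [Finset.mem_Icc] at hm
  have hmn : 1 ≤ m ∧ m ≤ n := ⟨hm.1, hm.2.trans hn⟩
  rw [w3_eq_w3Hom_left hij hik hjk, hγ, w3Hom_phi_eq_one_of_deletion_eq_one hij hik hjk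
    (hp m hmn.1 hmn.2) hφ hmn hmA (hβ m hmn.1 hmn.2)]
  rfl

theorem statement_9 (n : ℕ) (hn : 4 ≤ n)
    (p : ℕ → (PB n →* PB (n - 1))) (hp : ∀ m, 1 ≤ m → m ≤ n → IsShiftPB n m (p m))
    (φ : PB n →* G3 n) (hφ : IsPhi n φ)
    (β : PB n) (hβ : ∀ m, 1 ≤ m → m ≤ n → p m β = 1)
    (i j k : ℕ) (hi : 1 ≤ i ∧ i ≤ n) (hj : 1 ≤ j ∧ j ≤ n) (hk : 1 ≤ k ∧ k ≤ n)
    (hij : i ≠ j) (hik : i ≠ k) (hjk : j ≠ k)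
    (γ : List (TIdx n)) (hγg : good3 γ) (hγ : toG3 γ = φ β) :
    w3 i j k γ = 1 :=
  statement_9_general n hn p hp φ hφ β hβ i j k hij hik hjk γ hγ

end GnkBrunnian
end

section
/- Fix n ≥ 3 and l ∈ {1,…,n+1}. If β and β′ are good-condition words in the generators of G_{n+1}^2 representing the same element of G_{n+1}^2, then ψ_l(β) = ψ_l(β′) in G_{n,p}^2. In other words, ψ_l is a well-defined map from the subgroup of good-condition elements of G_{n+1}^2 to G_{n,p}^2. -/
namespace GnkBrunnian

/-!
Lift `ψ_l` to a homomorphism from `G_{n+1}^2` to the semidirect product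
`G_{n,p}^2 ⋊ (ℤ/2)^ℕ`, in which `v` acts by `a_{ij}^ε ↦ a_{ij}^{ε + v_i + v_j}`: a letter
`a_{il}` goes to the flip of the coordinate `i'`, any other letter `a_{ij}` to `a_{i'j'}^0`
(primes denote indices after deleting `l`). It respects the defining relations of `G_{n+1}^2`,
and pushing the flips of a word `β` to the right shows that the image of `β` is
`(ψ_l(β), parity vector of β)`: the exponent of a surviving letter is the number of flips its
endpoints received earlier. Equal elements thus have equal first components.
-/

section Triangle

variable {G : Type*} [Group G] {x y z : G}

theorem triangle_swap_left (hz : z * z = 1) (h : x * (y * z) = z * (y * x)) :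
    y * (x * z) = z * (x * y) := by
  have h' : z * (y * (x * z)) = x * (y * (z * z)) := by
    simpa only [mul_assoc] using congrArg (· * z) h.symm
  calc y * (x * z) = z * (z * (y * (x * z))) := by rw [← mul_assoc z z, hz, one_mul]
    _ = z * (x * y) := by rw [h', hz, mul_one]

theorem triangle_swap_right (hx : x * x = 1) (h : x * (y * z) = z * (y * x)) :
    x * (z * y) = y * (z * x) :=
  (triangle_swap_left hx h.symm).symm

end Triangle

theorem P2ok_sort2_iff {n a b : ℕ} :
    P2ok n (sort2 a b) ↔ a ≠ b ∧ 1 ≤ a ∧ a ≤ n ∧ 1 ≤ b ∧ b ≤ n := by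
  unfold P2ok sort2; omega

theorem sort2_comm (a b : ℕ) : sort2 a b = sort2 b a := by
  unfold sort2; rw [min_comm, max_comm]

theorem sort2_sum {M : Type*} [AddCommMagma M] (v : ℕ → M) (a b : ℕ) :
    v (sort2 a b).1 + v (sort2 a b).2 = v a + v b := by
  unfold sort2
  rcases le_total a b with hab | hab
  · rw [min_eq_left hab, max_eq_right hab]
  · rw [min_eq_right hab, max_eq_left hab, add_comm]

section GP2

variable {n : ℕ}

def ggenP2 (n a b : ℕ) (e : ZMod 2) : GP2 n := PresentedGroup.mk (relsP2 n) (fgenP2 n a b e)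

theorem ggenP2_of {a b : ℕ} (h : P2ok n (sort2 a b)) (e : ZMod 2) :
    ggenP2 n a b e = PresentedGroup.of (⟨sort2 a b, h⟩, e) := by
  rw [ggenP2, fgenP2, dif_pos h]; rfl

theorem ggenP2_of_not {a b : ℕ} (h : ¬ P2ok n (sort2 a b)) (e : ZMod 2) :
    ggenP2 n a b e = 1 := by
  rw [ggenP2, fgenP2, dif_neg h, map_one]

theorem ggenP2_swap (a b : ℕ) (e : ZMod 2) : ggenP2 n a b e = ggenP2 n b a e := by
  rw [ggenP2, ggenP2, fgenP2, fgenP2, sort2_comm]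

theorem mk_eq_one_of_mem_relsP2 {r : FreeGroup (PPIdx n)} (hr : r ∈ relsP2 n) :
    PresentedGroup.mk (relsP2 n) r = 1 :=
  (QuotientGroup.eq_one_iff r).2 (Subgroup.subset_normalClosure hr)

theorem of_mul_self_P2 (x : PPIdx n) :
    (PresentedGroup.of x : GP2 n) * PresentedGroup.of x = 1 := by
  have h := mk_eq_one_of_mem_relsP2 (n := n) (r := .of x * .of x) (Or.inl (Or.inl ⟨x, rfl⟩))
  rwa [map_mul] at h

theorem ggenP2_mul_self (a b : ℕ) (e : ZMod 2) : ggenP2 n a b e * ggenP2 n a b e = 1 := by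
  by_cases h : P2ok n (sort2 a b)
  · rw [ggenP2_of h]; exact of_mul_self_P2 _
  · rw [ggenP2_of_not h, one_mul]

theorem ggenP2_commute {i j k m : ℕ} (e e' : ZMod 2) (hik : i ≠ k) (him : i ≠ m)
    (hjk : j ≠ k) (hjm : j ≠ m) :
    Commute (ggenP2 n i j e) (ggenP2 n k m e') := by
  by_cases h₁ : P2ok n (sort2 i j)
  · by_cases h₂ : P2ok n (sort2 k m)
    · obtain ⟨hij, hi1, hin, hj1, hjn⟩ := P2ok_sort2_iff.1 h₁
      obtain ⟨hkm, hk1, hkn, hm1, hmn⟩ := P2ok_sort2_iff.1 h₂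
      have h := mk_eq_one_of_mem_relsP2 (Or.inl (Or.inr ⟨i, j, k, m, e, e', hi1, hin, hj1, hjn,
        hk1, hkn, hm1, hmn, hij, hik, him, hjk, hjm, hkm, rfl⟩))
      simp only [map_mul, map_inv] at h
      exact commutatorElement_eq_one_iff_mul_comm.1 h
    · rw [ggenP2_of_not h₂]; exact Commute.one_right _
  · rw [ggenP2_of_not h₁]; exact Commute.one_left _

theorem ggenP2_triangle {i j k : ℕ} {e₁ e₂ e₃ : ZMod 2} (hij : i < j) (hjk : j < k)
    (he : e₁ + e₂ + e₃ = 0) :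
    ggenP2 n i j e₁ * (ggenP2 n i k e₂ * ggenP2 n j k e₃)
      = ggenP2 n j k e₃ * (ggenP2 n i k e₂ * ggenP2 n i j e₁) := by
  by_cases hi : 1 ≤ i
  · by_cases hk : k ≤ n
    · have h := mk_eq_one_of_mem_relsP2 (n := n)
        (Or.inr ⟨i, j, k, e₁, e₂, e₃, hi, hij, hjk, hk, he, rfl⟩)
      rw [map_mul, map_inv, mul_inv_eq_one] at h
      simp only [map_mul, mul_assoc] at h
      exact h
    · have hik : ¬ P2ok n (sort2 i k) := fun h => hk (P2ok_sort2_iff.1 h).2.2.2.2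
      have hjk : ¬ P2ok n (sort2 j k) := fun h => hk (P2ok_sort2_iff.1 h).2.2.2.2
      simp only [ggenP2_of_not hik, ggenP2_of_not hjk, one_mul, mul_one]
  · have hij : ¬ P2ok n (sort2 i j) := fun h => hi (P2ok_sort2_iff.1 h).2.1
    have hik : ¬ P2ok n (sort2 i k) := fun h => hi (P2ok_sort2_iff.1 h).2.1
    simp only [ggenP2_of_not hij, ggenP2_of_not hik, one_mul, mul_one]

theorem ggenP2_triangle_of_ne {a b c : ℕ} {e₁ e₂ e₃ : ZMod 2} (hab : a ≠ b) (hac : a ≠ c)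
    (hbc : b ≠ c) (he : e₁ + e₂ + e₃ = 0) :
    ggenP2 n a b e₁ * (ggenP2 n a c e₂ * ggenP2 n b c e₃)
      = ggenP2 n b c e₃ * (ggenP2 n a c e₂ * ggenP2 n a b e₁) := by
  have he₂ : e₂ + e₁ + e₃ = 0 := by rw [← he]; ring
  have he₃ : e₁ + e₃ + e₂ = 0 := by rw [← he]; ring
  have he₄ : e₃ + e₁ + e₂ = 0 := by rw [← he]; ring
  have he₅ : e₂ + e₃ + e₁ = 0 := by rw [← he]; ring
  have he₆ : e₃ + e₂ + e₁ = 0 := by rw [← he]; ring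
  -- reduce to the relation for the sorted triple, using that all letters are involutions
  rcases hab.lt_or_gt with hab | hab <;> rcases hac.lt_or_gt with hac | hac <;>
    rcases hbc.lt_or_gt with hbc | hbc
  · exact ggenP2_triangle hab hbc he
  · have h := ggenP2_triangle (n := n) hac hbc he₂
    rw [ggenP2_swap c b] at h
    exact triangle_swap_left (ggenP2_mul_self _ _ _) h
  · omega
  · have h := ggenP2_triangle (n := n) hac hab he₅
    rw [ggenP2_swap c a, ggenP2_swap c b] at h
    exact triangle_swap_right (ggenP2_mul_self _ _ _) h.symm
  · have h := ggenP2_triangle (n := n) hab hac he₃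
    rw [ggenP2_swap b a] at h
    exact triangle_swap_right (ggenP2_mul_self _ _ _) h
  · omega
  · have h := ggenP2_triangle (n := n) hbc hac he₄
    rw [ggenP2_swap b a, ggenP2_swap c a] at h
    exact triangle_swap_left (ggenP2_mul_self _ _ _) h.symm
  · have h := ggenP2_triangle (n := n) hbc hab he₆
    rw [ggenP2_swap c b, ggenP2_swap c a, ggenP2_swap b a] at h
    exact h.symm

end GP2

section Twist

variable {n : ℕ}

def twistGen (n : ℕ) (v : ℕ → ZMod 2) (y : PPIdx n) : PPIdx n :=
  (y.1, y.2 + v y.1.1.1 + v y.1.1.2)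

theorem lift_twistGen_fgenP2 (v : ℕ → ZMod 2) (a b : ℕ) (e : ZMod 2) :
    FreeGroup.lift (fun y => (PresentedGroup.of (twistGen n v y) : GP2 n)) (fgenP2 n a b e)
      = ggenP2 n a b (e + v a + v b) := by
  unfold fgenP2
  split_ifs with h
  · rw [FreeGroup.lift_apply_of, ggenP2_of h, twistGen, add_assoc, add_assoc]
    congr 3
    exact sort2_sum v a b
  · rw [map_one, ggenP2_of_not h]

def twist (n : ℕ) (v : ℕ → ZMod 2) : GP2 n →* GP2 n :=
  PresentedGroup.toGroup (f := fun y => PresentedGroup.of (twistGen n v y)) <| by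
    rintro r ((⟨x, rfl⟩ | ⟨i, j, k, m, e, e', -, -, -, -, -, -, -, -,
        -, hik, him, hjk, hjm, -, rfl⟩) | ⟨i, j, k, e₁, e₂, e₃, -, hij, hjk, -, he, rfl⟩)
    · rw [map_mul, FreeGroup.lift_apply_of]
      exact of_mul_self_P2 _
    · simp only [map_mul, map_inv, lift_twistGen_fgenP2]
      rw [← commutatorElement_def]
      exact commutatorElement_eq_one_iff_mul_comm.2 (ggenP2_commute _ _ hik him hjk hjm)
    · simp only [map_mul, map_inv, lift_twistGen_fgenP2, mul_inv_eq_one]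
      -- each index occurs in two letters of the triangle, so its flips cancel
      have he' : (e₁ + v i + v j) + (e₂ + v i + v k) + (e₃ + v j + v k) = 0 := by
        linear_combination he + CharTwo.add_self_eq_zero (v i) + CharTwo.add_self_eq_zero (v j)
          + CharTwo.add_self_eq_zero (v k)
      simpa only [mul_assoc] using ggenP2_triangle hij hjk he'

theorem twist_of (v : ℕ → ZMod 2) (y : PPIdx n) :
    twist n v (PresentedGroup.of y) = PresentedGroup.of (twistGen n v y) :=
  PresentedGroup.toGroup.of _

theorem twist_ggenP2 (v : ℕ → ZMod 2) (a b : ℕ) (e : ZMod 2) :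
    twist n v (ggenP2 n a b e) = ggenP2 n a b (e + v a + v b) :=
  lift_twistGen_fgenP2 v a b e

theorem twist_comp_twist (v w : ℕ → ZMod 2) : (twist n v).comp (twist n w) = twist n (v + w) := by
  refine PresentedGroup.ext fun y => ?_
  simp only [MonoidHom.comp_apply, twist_of, twistGen, Pi.add_apply]
  congr 2
  ring

theorem twist_zero : twist n 0 = MonoidHom.id (GP2 n) := by
  refine PresentedGroup.ext fun y => ?_
  simp [twist_of, twistGen]

theorem twist_comp_self (v : ℕ → ZMod 2) : (twist n v).comp (twist n v) = MonoidHom.id _ := by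
  rw [twist_comp_twist, ← two_nsmul, CharTwo.two_nsmul, twist_zero]

def twistAut (n : ℕ) : Multiplicative (ℕ → ZMod 2) →* MulAut (GP2 n) where
  toFun v := (twist n v.toAdd).toMulEquiv (twist n v.toAdd) (twist_comp_self _) (twist_comp_self _)
  map_one' := MulEquiv.ext fun x => DFunLike.congr_fun twist_zero x
  map_mul' _ _ := MulEquiv.ext fun x => (DFunLike.congr_fun (twist_comp_twist _ _) x).symm

abbrev GP2Parity (n : ℕ) := GP2 n ⋊[twistAut n] Multiplicative (ℕ → ZMod 2)

theorem inr_mul_inl (v : ℕ → ZMod 2) (g : GP2 n) :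
    (SemidirectProduct.inr (Multiplicative.ofAdd v) : GP2Parity n) * SemidirectProduct.inl g
      = SemidirectProduct.inl (twist n v g) * SemidirectProduct.inr (Multiplicative.ofAdd v) := by
  change _ = SemidirectProduct.inl (twistAut n (Multiplicative.ofAdd v) g) * _
  rw [SemidirectProduct.inl_aut, map_inv, inv_mul_cancel_right]

end Twist

theorem del_inj {l x y : ℕ} (hx : x ≠ l) (hy : y ≠ l) : del l x = del l y ↔ x = y := by
  unfold del; split_ifs <;> omega

theorem del_ne_del {l x y : ℕ} (hx : x ≠ l) (hy : y ≠ l) (hxy : x ≠ y) : del l x ≠ del l y :=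
  hxy ∘ (del_inj hx hy).1

section Psi

variable {n l : ℕ}

def parityFlip (l a b : ℕ) : ℕ → ZMod 2 :=
  if l = a then Pi.single (del l b) 1 else if l = b then Pi.single (del l a) 1 else 0

def psiGen (n l a b : ℕ) : GP2Parity n :=
  if l = a ∨ l = b then SemidirectProduct.inr (Multiplicative.ofAdd (parityFlip l a b))
  else SemidirectProduct.inl (ggenP2 n (del l a) (del l b) 0)

theorem psiGen_of_ne {a b : ℕ} (ha : l ≠ a) (hb : l ≠ b) :
    psiGen n l a b = SemidirectProduct.inl (ggenP2 n (del l a) (del l b) 0) := by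
  rw [psiGen, if_neg (not_or.2 ⟨ha, hb⟩)]

theorem psiGen_of_eq_left {a b : ℕ} (ha : l = a) :
    psiGen n l a b = SemidirectProduct.inr (Multiplicative.ofAdd (Pi.single (del l b) 1)) := by
  rw [psiGen, if_pos (Or.inl ha), parityFlip, if_pos ha]

theorem psiGen_swap {a b : ℕ} (hab : a ≠ b) : psiGen n l a b = psiGen n l b a := by
  by_cases ha : l = a
  · rw [psiGen_of_eq_left ha, psiGen, if_pos (Or.inr ha), parityFlip, if_neg (by omega), if_pos ha]
  by_cases hb : l = b
  · rw [psiGen_of_eq_left hb, psiGen, if_pos (Or.inr hb), parityFlip, if_neg ha, if_pos hb]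
  rw [psiGen_of_ne ha hb, psiGen_of_ne hb ha, ggenP2_swap]

theorem exists_psiGen_eq_inr {a b : ℕ} (hab : a ≠ b) (h : l = a ∨ l = b) :
    ∃ p, p ≠ l ∧ (p = a ∨ p = b) ∧
      psiGen n l a b = SemidirectProduct.inr (Multiplicative.ofAdd (Pi.single (del l p) 1)) := by
  rcases h with h | h
  · exact ⟨b, by omega, Or.inr rfl, psiGen_of_eq_left h⟩
  · exact ⟨a, by omega, Or.inl rfl, psiGen_swap hab ▸ psiGen_of_eq_left h⟩

theorem psiGen_mul_self (a b : ℕ) : psiGen n l a b * psiGen n l a b = 1 := by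
  unfold psiGen
  split_ifs
  · rw [← map_mul, ← ofAdd_add, CharTwo.add_self_eq_zero, ofAdd_zero, map_one]
  · rw [← map_mul, ggenP2_mul_self, map_one]

theorem inr_single_commute_inl_ggenP2 {p a b : ℕ} (e : ZMod 2) (ha : a ≠ p) (hb : b ≠ p) :
    Commute (SemidirectProduct.inr (Multiplicative.ofAdd (Pi.single p 1)) : GP2Parity n)
      (SemidirectProduct.inl (ggenP2 n a b e)) := by
  rw [Commute, SemiconjBy, inr_mul_inl, twist_ggenP2, Pi.single_eq_of_ne ha,
    Pi.single_eq_of_ne hb, add_zero, add_zero]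

theorem psiGen_commute {i j k m : ℕ} (hij : i ≠ j) (hik : i ≠ k) (him : i ≠ m) (hjk : j ≠ k)
    (hjm : j ≠ m) (hkm : k ≠ m) :
    Commute (psiGen n l i j) (psiGen n l k m) := by
  by_cases hl : l = i ∨ l = j
  · obtain ⟨p, hpl, hp, hpsi⟩ := exists_psiGen_eq_inr (n := n) hij hl
    rw [hpsi]
    by_cases hl' : l = k ∨ l = m
    · obtain ⟨q, -, -, hqsi⟩ := exists_psiGen_eq_inr (n := n) hkm hl'
      rw [hqsi]
      exact (Commute.all _ _).map _
    · rw [psiGen_of_ne (not_or.1 hl').1 (not_or.1 hl').2]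
      exact inr_single_commute_inl_ggenP2 _ (del_ne_del (by omega) hpl (by omega))
        (del_ne_del (by omega) hpl (by omega))
  · rw [psiGen_of_ne (not_or.1 hl).1 (not_or.1 hl).2]
    by_cases hl' : l = k ∨ l = m
    · obtain ⟨q, hql, hq, hqsi⟩ := exists_psiGen_eq_inr (n := n) hkm hl'
      rw [hqsi]
      exact (inr_single_commute_inl_ggenP2 _ (del_ne_del (by omega) hql (by omega))
        (del_ne_del (by omega) hql (by omega))).symm
    · rw [psiGen_of_ne (not_or.1 hl').1 (not_or.1 hl').2]
      exact (ggenP2_commute _ _ (del_ne_del (by omega) (by omega) hik)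
        (del_ne_del (by omega) (by omega) him) (del_ne_del (by omega) (by omega) hjk)
        (del_ne_del (by omega) (by omega) hjm)).map _

theorem psiGen_triangle_of_eq_left {i j k : ℕ} (hl : l = i) (hij : i ≠ j) (hik : i ≠ k)
    (hjk : j ≠ k) :
    psiGen n l i j * (psiGen n l i k * psiGen n l j k)
      = psiGen n l j k * (psiGen n l i k * psiGen n l i j) := by
  have hjk' : del l j ≠ del l k := del_ne_del (by omega) (by omega) hjk
  have inr_mul_inr (v w : ℕ → ZMod 2) :
      (SemidirectProduct.inr (Multiplicative.ofAdd v) : GP2Parity n)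
        * SemidirectProduct.inr (Multiplicative.ofAdd w)
      = SemidirectProduct.inr (Multiplicative.ofAdd (v + w)) := by rw [ofAdd_add, map_mul]
  rw [psiGen_of_eq_left hl, psiGen_of_eq_left hl, psiGen_of_ne (by omega) (by omega),
    ← mul_assoc, inr_mul_inr, inr_mul_inl, twist_ggenP2, inr_mul_inr,
    add_comm (Pi.single (del l k) _)]
  congr 3
  simp only [Pi.add_apply, Pi.single_eq_same, Pi.single_eq_of_ne hjk', Pi.single_eq_of_ne hjk'.symm]
  decide

theorem psiGen_triangle {i j k : ℕ} (hij : i ≠ j) (hik : i ≠ k) (hjk : j ≠ k) :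
    psiGen n l i j * (psiGen n l i k * psiGen n l j k)
      = psiGen n l j k * (psiGen n l i k * psiGen n l i j) := by
  by_cases hi : l = i
  · exact psiGen_triangle_of_eq_left hi hij hik hjk
  by_cases hj : l = j
  · have h := psiGen_triangle_of_eq_left (n := n) hj hij.symm hjk hik
    rw [psiGen_swap hij.symm] at h
    exact triangle_swap_right (psiGen_mul_self _ _) h
  by_cases hk : l = k
  · have h := psiGen_triangle_of_eq_left (n := n) hk hik.symm hjk.symm hij
    rw [psiGen_swap hik.symm, psiGen_swap hjk.symm] at h
    exact triangle_swap_right (psiGen_mul_self _ _) h.symm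
  rw [psiGen_of_ne hi hj, psiGen_of_ne hi hk, psiGen_of_ne hj hk, ← map_mul, ← map_mul,
    ← map_mul, ← map_mul, ggenP2_triangle_of_ne (del_ne_del (Ne.symm hi) (Ne.symm hj) hij)
      (del_ne_del (Ne.symm hi) (Ne.symm hk) hik) (del_ne_del (Ne.symm hj) (Ne.symm hk) hjk)
      (by decide)]

theorem lift_psiGen_fgen2 {a b : ℕ} (h : P2ok (n + 1) (sort2 a b)) :
    FreeGroup.lift (fun x : PIdx (n + 1) => psiGen n l x.1.1 x.1.2) (fgen2 (n + 1) a b)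
      = psiGen n l a b := by
  rw [fgen2, dif_pos h, FreeGroup.lift_apply_of]
  change psiGen n l (sort2 a b).1 (sort2 a b).2 = psiGen n l a b
  unfold sort2
  rcases le_total a b with hab | hab
  · rw [min_eq_left hab, max_eq_right hab]
  · rw [min_eq_right hab, max_eq_left hab, psiGen_swap (P2ok_sort2_iff.1 h).1.symm]

def psiHom (n l : ℕ) : G2 (n + 1) →* GP2Parity n :=
  PresentedGroup.toGroup (f := fun x => psiGen n l x.1.1 x.1.2) <| by
    rintro r ((⟨x, rfl⟩ | ⟨i, j, k, m, hi1, hin, hj1, hjn, hk1, hkn, hm1, hmn, hij, hik, him,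
        hjk, hjm, hkm, rfl⟩) | ⟨i, j, k, hi1, hin, hj1, hjn, hk1, hkn, hij, hik, hjk, rfl⟩)
    · rw [map_mul, FreeGroup.lift_apply_of]
      exact psiGen_mul_self _ _
    · simp only [map_mul, map_inv,
        lift_psiGen_fgen2 (P2ok_sort2_iff.2 ⟨hij, hi1, hin, hj1, hjn⟩),
        lift_psiGen_fgen2 (P2ok_sort2_iff.2 ⟨hkm, hk1, hkn, hm1, hmn⟩)]
      rw [← commutatorElement_def]
      exact commutatorElement_eq_one_iff_mul_comm.2 (psiGen_commute hij hik him hjk hjm hkm)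
    · simp only [map_mul, map_inv, mul_inv_eq_one,
        lift_psiGen_fgen2 (P2ok_sort2_iff.2 ⟨hij, hi1, hin, hj1, hjn⟩),
        lift_psiGen_fgen2 (P2ok_sort2_iff.2 ⟨hik, hi1, hin, hk1, hkn⟩),
        lift_psiGen_fgen2 (P2ok_sort2_iff.2 ⟨hjk, hj1, hjn, hk1, hkn⟩)]
      simpa only [mul_assoc] using psiGen_triangle hij hik hjk

theorem psiHom_of (x : PIdx (n + 1)) :
    psiHom n l (PresentedGroup.of x) = psiGen n l x.1.1 x.1.2 :=
  PresentedGroup.toGroup.of _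

end Psi

theorem filterMap_zipIdx_take_cons {α γ : Type*} (f : List α → α → Option γ) (a : α)
    (β : List α) :
    ((a :: β).zipIdx.map Prod.swap).filterMap (fun p => f ((a :: β).take p.1) p.2)
      = (f [] a).toList
        ++ (β.zipIdx.map Prod.swap).filterMap (fun p => f (a :: β.take p.1) p.2) := by
  rw [List.zipIdx_cons', List.map_cons, List.map_map, List.filterMap_cons]
  rcases h : f [] a <;> simp [h, List.filterMap_map, Function.comp_def]

theorem pairSet_eq_iff {n : ℕ} (x : PIdx n) (a b : ℕ) :
    pairSet x = {a, b} ↔ x.1.1 = a ∧ x.1.2 = b ∨ x.1.1 = b ∧ x.1.2 = a := by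
  rw [pairSet, ← Finset.coe_inj, Finset.coe_pair, Finset.coe_pair, Set.pair_eq_pair_iff]

section Words

variable {n l : ℕ}

theorem cast_cnt2_cons (a : PIdx (n + 1)) (pre : List (PIdx (n + 1))) {i : ℕ} (hi : i ≠ l) :
    ((cnt2 (a :: pre) i l : ℕ) : ZMod 2) = cnt2 pre i l + parityFlip l a.1.1 a.1.2 (del l i) := by
  have h12 := a.2.2.1
  have hcons : ((cnt2 (a :: pre) i l : ℕ) : ZMod 2) = cnt2 pre i l
      + if a.1.1 = i ∧ a.1.2 = l ∨ a.1.1 = l ∧ a.1.2 = i then 1 else 0 := by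
    unfold cnt2
    by_cases hp : pairSet a = {i, l}
    · simp [hp, (pairSet_eq_iff a i l).1 hp, add_comm]
    · simp [hp, mt (pairSet_eq_iff a i l).2 hp]
  rw [hcons, parityFlip]
  congr 1
  by_cases h1 : l = a.1.1
  · simp only [if_pos h1, Pi.single_apply, del_inj hi (by omega : a.1.2 ≠ l)]
    split_ifs <;> first | rfl | omega
  by_cases h2 : l = a.1.2
  · simp only [if_neg h1, if_pos h2, Pi.single_apply, del_inj hi (by omega : a.1.1 ≠ l)]
    split_ifs <;> first | rfl | omega
  rw [if_neg h1, if_neg h2, if_neg (by omega), Pi.zero_apply]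

def psiLetter (n l : ℕ) (pre : List (PIdx (n + 1))) (x : PIdx (n + 1)) : Option (PPIdx n) :=
  if l = x.1.1 ∨ l = x.1.2 then none
  else (pairMkS n (del l x.1.1) (del l x.1.2)).map fun p =>
    (p, ((cnt2 pre x.1.1 l + cnt2 pre x.1.2 l : ℕ) : ZMod 2))

theorem psiWord_eq_filterMap (β : List (PIdx (n + 1))) :
    psiWord n l β = (β.zipIdx.map Prod.swap).filterMap (fun p => psiLetter n l (β.take p.1) p.2) :=
  rfl

theorem psiLetter_cons (a : PIdx (n + 1)) (pre : List (PIdx (n + 1))) (x : PIdx (n + 1)) :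
    psiLetter n l (a :: pre) x
      = (psiLetter n l pre x).map (twistGen n (parityFlip l a.1.1 a.1.2)) := by
  unfold psiLetter
  split_ifs with hx
  · rfl
  rw [not_or] at hx
  unfold pairMkS
  split_ifs
  · simp only [Option.map_some, twistGen, Option.some.injEq, Prod.mk.injEq, true_and]
    rw [add_assoc _ (parityFlip _ _ _ _), sort2_sum, Nat.cast_add, Nat.cast_add,
      cast_cnt2_cons a pre (Ne.symm hx.1), cast_cnt2_cons a pre (Ne.symm hx.2)]
    ring
  · rfl

theorem psiWord_cons (a : PIdx (n + 1)) (β : List (PIdx (n + 1))) :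
    psiWord n l (a :: β)
      = (psiLetter n l [] a).toList
        ++ (psiWord n l β).map (twistGen n (parityFlip l a.1.1 a.1.2)) := by
  rw [psiWord_eq_filterMap, filterMap_zipIdx_take_cons, psiWord_eq_filterMap,
    List.map_filterMap]
  simp only [psiLetter_cons]

theorem toGP2_append (w w' : List (PPIdx n)) : toGP2 (w ++ w') = toGP2 w * toGP2 w' := by
  simp [toGP2]

theorem toGP2_map_twistGen (v : ℕ → ZMod 2) (w : List (PPIdx n)) :
    toGP2 (w.map (twistGen n v)) = twist n v (toGP2 w) := by
  simp [toGP2, map_list_prod, twist_of, Function.comp_def]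

theorem toGP2_pairMkS (a b : ℕ) (e : ZMod 2) :
    toGP2 ((pairMkS n a b).map fun p => (p, e)).toList = ggenP2 n a b e := by
  unfold pairMkS
  split_ifs with h
  · simp [toGP2, ggenP2_of h]
  · simp [toGP2, ggenP2_of_not h]

theorem psiGen_eq_psiLetter (a : PIdx (n + 1)) :
    psiGen n l a.1.1 a.1.2
      = SemidirectProduct.inl (toGP2 (psiLetter n l [] a).toList)
        * SemidirectProduct.inr (Multiplicative.ofAdd (parityFlip l a.1.1 a.1.2)) := by
  unfold psiGen psiLetter
  split_ifs with h
  · simp [toGP2]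
  · rw [parityFlip, if_neg (not_or.1 h).1, if_neg (not_or.1 h).2]
    simp [cnt2, toGP2_pairMkS]

def parityVec (l : ℕ) (β : List (PIdx (n + 1))) : ℕ → ZMod 2 :=
  (β.map fun a => parityFlip l a.1.1 a.1.2).sum

theorem parityVec_cons (a : PIdx (n + 1)) (β : List (PIdx (n + 1))) :
    parityVec l (a :: β) = parityFlip l a.1.1 a.1.2 + parityVec l β := by
  simp [parityVec]

theorem psiHom_toG2 (β : List (PIdx (n + 1))) :
    psiHom n l (toG2 β)
      = SemidirectProduct.inl (toGP2 (psiWord n l β))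
        * SemidirectProduct.inr (Multiplicative.ofAdd (parityVec l β)) := by
  induction β with
  | nil => simp [toG2, toGP2, psiWord, parityVec]
  | cons a β ih =>
    have htoG2 : toG2 (a :: β) = PresentedGroup.of a * toG2 β := by simp [toG2]
    rw [htoG2, map_mul, ih, psiHom_of, psiGen_eq_psiLetter, psiWord_cons, toGP2_append,
      toGP2_map_twistGen, parityVec_cons, mul_assoc,
      ← mul_assoc (SemidirectProduct.inr _), inr_mul_inl, ofAdd_add]
    simp only [map_mul, mul_assoc]

end Words

theorem statement_11_general (n l : ℕ)
    (β β' : List (PIdx (n + 1)))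
    (h : toG2 β = toG2 β') :
    toGP2 (psiWord n l β) = toGP2 (psiWord n l β') := by
  have h' := congrArg (psiHom n l) h
  rw [psiHom_toG2, psiHom_toG2] at h'
  simpa using congrArg SemidirectProduct.left h'

theorem statement_11 (n l : ℕ) (hn : 3 ≤ n) (hl1 : 1 ≤ l) (hl2 : l ≤ n + 1)
    (β β' : List (PIdx (n + 1))) (hg : good2 β) (hg' : good2 β')
    (h : toG2 β = toG2 β') :
    toGP2 (psiWord n l β) = toGP2 (psiWord n l β') :=
  statement_11_general n l β β' h

end GnkBrunnian
end
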